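/- arXiv:1509.01268 — 3 statements merged into one kernel-verified Lean document; each statement's English description precedes it below -/
import Mathlib

section
/- Let X be a finite set with |X| = K ≥ 4, let s ≥ 1, and let ψ : X → C^(2^s) map into unit vectors such that |⟨ψ(v), ψ(w)⟩| ≤ δ < 1 for all distinct v, w ∈ X. Then s ≥ log₂ log₂ K − log₂ log₂ (1 + √(2/(1−δ))) − 1. -/
open scoped InnerProductSpace
open MeasureTheory Metric Module
open scoped ENNReal

lemma pack_aux {E : Type*} [NormedAddCommGroup E] [NormedSpace ℝ E]
    [FiniteDimensional ℝ E] [Nontrivial E]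
    {X : Type*} [Fintype X] (f : X → E) (hf : ∀ v, ‖f v‖ ≤ 1) {r : ℝ} (hr : 0 < r)
    (hsep : ∀ v w : X, v ≠ w → 2 * r ≤ dist (f v) (f w)) :
    (Fintype.card X : ℝ) * r ^ (finrank ℝ E) ≤ (1 + r) ^ (finrank ℝ E) := by
  borelize E
  set n := finrank ℝ E with hn
  set μ := (Module.finBasis ℝ E).addHaar with hμ
  have hd : Pairwise (Function.onFun Disjoint fun v => ball (f v) r) := by
    intro v w hvw
    exact ball_disjoint_ball (by linarith [hsep v w hvw])
  have hsub : (⋃ v, ball (f v) r) ⊆ ball (0 : E) (1 + r) := by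
    intro x hx
    simp only [Set.mem_iUnion, mem_ball] at hx ⊢
    obtain ⟨v, hv⟩ := hx
    calc dist x 0 ≤ dist x (f v) + dist (f v) 0 := dist_triangle _ _ _
    _ < r + 1 := by
        have := hf v
        rw [dist_zero_right] at *
        linarith
    _ = 1 + r := by ring
  have h1 : μ (⋃ v, ball (f v) r) = (Fintype.card X : ℝ≥0∞) * μ (ball 0 r) := by
    rw [measure_iUnion hd fun v => measurableSet_ball, tsum_fintype]
    simp [Measure.addHaar_ball_center, Finset.card_univ]
  have h2 : μ (⋃ v, ball (f v) r) ≤ μ (ball 0 (1 + r)) := measure_mono hsub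
  rw [h1, Measure.addHaar_ball μ _ hr.le,
    Measure.addHaar_ball μ _ (by linarith : (0:ℝ) ≤ 1 + r)] at h2
  have hB0 : 0 < μ (ball (0:E) 1) := measure_ball_pos μ _ one_pos
  have hBt : μ (ball (0:E) 1) ≠ ⊤ := measure_ball_lt_top.ne
  rw [← mul_assoc] at h2
  have h3 : (Fintype.card X : ℝ≥0∞) * ENNReal.ofReal (r ^ n) ≤ ENNReal.ofReal ((1 + r) ^ n) :=
    (ENNReal.mul_le_mul_iff_left hB0.ne' hBt).mp h2
  have := ENNReal.toReal_mono (ENNReal.ofReal_ne_top) h3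
  rw [ENNReal.toReal_mul, ENNReal.toReal_ofReal (by positivity),
    ENNReal.toReal_ofReal (by positivity)] at this
  simpa using this

theorem stmt_4 {X : Type*} [Fintype X] (K s : ℕ) (hK : Fintype.card X = K)
    (hK4 : 4 ≤ K) (hs : 1 ≤ s)
    (ψ : X → EuclideanSpace ℂ (Fin (2 ^ s)))
    (hunit : ∀ w, ‖ψ w‖ = 1) (δ : ℝ) (hδ1 : δ < 1)
    (h : ∀ v w : X, v ≠ w → ‖⟪ψ v, ψ w⟫_ℂ‖ ≤ δ) :
    (s : ℝ) ≥ Real.logb 2 (Real.logb 2 K)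
      - Real.logb 2 (Real.logb 2 (1 + Real.sqrt (2 / (1 - δ)))) - 1 := by
  -- δ is nonnegative
  have hδ0 : 0 ≤ δ := by
    have h1card : 1 < Fintype.card X := by omega
    obtain ⟨v, w, hvw⟩ := Fintype.exists_pair_of_one_lt_card h1card
    exact le_trans (norm_nonneg _) (h v w hvw)
  have h1δ : 0 < 1 - δ := by linarith
  set t : ℝ := Real.sqrt (2 / (1 - δ)) with ht
  set r : ℝ := Real.sqrt (2 * (1 - δ)) / 2 with hr
  have hrpos : 0 < r := by
    have : 0 < Real.sqrt (2 * (1 - δ)) := Real.sqrt_pos.mpr (by linarith)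
    positivity
  have hrt : r * t = 1 := by
    rw [hr, ht, div_mul_eq_mul_div, ← Real.sqrt_mul (by linarith)]
    rw [show 2 * (1 - δ) * (2 / (1 - δ)) = 4 by field_simp; ring]
    rw [show (4:ℝ) = 2^2 by norm_num, Real.sqrt_sq (by norm_num)]
    norm_num
  have htpos : 0 < t := by nlinarith
  -- separation
  have hsep : ∀ v w : X, v ≠ w → 2 * r ≤ dist (ψ v) (ψ w) := by
    intro v w hvw
    have hsq : (2 * r) ^ 2 ≤ dist (ψ v) (ψ w) ^ 2 := by
      rw [dist_eq_norm]
      have hns : ‖ψ v - ψ w‖ ^ 2 = ‖ψ v‖ ^ 2 - 2 * Complex.re ⟪ψ v, ψ w⟫_ℂ + ‖ψ w‖ ^ 2 := by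
        exact_mod_cast @norm_sub_sq ℂ _ _ _ _ (ψ v) (ψ w)
      have hre : Complex.re ⟪ψ v, ψ w⟫_ℂ ≤ δ :=
        le_trans (Complex.re_le_norm _) (h v w hvw)
      have h2r : (2 * r) ^ 2 = 2 * (1 - δ) := by
        rw [hr]
        rw [mul_pow, div_pow, Real.sq_sqrt (by linarith)]
        ring
      rw [hns, hunit v, hunit w, h2r]
      linarith
    nlinarith [dist_nonneg (x := ψ v) (y := ψ w), hrpos]
  -- apply packing
  have hfr : finrank ℝ (EuclideanSpace ℂ (Fin (2 ^ s))) = 2 * 2 ^ s := by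
    rw [← finrank_mul_finrank ℝ ℂ, Complex.finrank_real_complex, finrank_euclideanSpace,
      Fintype.card_fin]
  have hpack := pack_aux ψ (fun v => (hunit v).le) hrpos hsep
  rw [hfr, hK] at hpack
  set n : ℕ := 2 * 2 ^ s with hn
  -- K ≤ (1 + t)^n
  have hKc : (K : ℝ) ≤ (1 + t) ^ n := by
    have h5 : (K : ℝ) * r ^ n * t ^ n ≤ (1 + r) ^ n * t ^ n :=
      mul_le_mul_of_nonneg_right hpack (by positivity)
    calc (K : ℝ) = (K : ℝ) * (r * t) ^ n := by rw [hrt]; simp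
    _ = (K : ℝ) * r ^ n * t ^ n := by rw [mul_pow]; ring
    _ ≤ (1 + r) ^ n * t ^ n := h5
    _ = ((1 + r) * t) ^ n := (mul_pow _ _ _).symm
    _ = (t + 1) ^ n := by rw [add_mul, one_mul, hrt]
    _ = (1 + t) ^ n := by ring
  -- t ≥ √2 > 1, so 1 + t > 2
  have ht2 : 2 < 1 + t := by
    have h2le : (2:ℝ) ≤ 2 / (1 - δ) := by
      rw [le_div_iff₀ h1δ]; nlinarith
    have : Real.sqrt 2 ≤ t := Real.sqrt_le_sqrt h2le
    have h12 : (1:ℝ) < Real.sqrt 2 := by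
      have := Real.sqrt_lt_sqrt (by norm_num : (0:ℝ) ≤ 1) (by norm_num : (1:ℝ) < 2)
      simpa using this
    linarith
  have hlc : 1 < Real.logb 2 (1 + t) := by
    calc (1:ℝ) = Real.logb 2 2 := (Real.logb_self_eq_one (by norm_num)).symm
    _ < Real.logb 2 (1 + t) := Real.logb_lt_logb (by norm_num) (by norm_num) ht2
  have hlK : 2 ≤ Real.logb 2 K := by
    calc (2:ℝ) = Real.logb 2 4 := by
          rw [show (4:ℝ) = 2 ^ (2:ℕ) by norm_num, Real.logb_pow,
            Real.logb_self_eq_one (by norm_num)]; norm_num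
    _ ≤ Real.logb 2 K := Real.logb_le_logb_of_le (by norm_num) (by norm_num)
          (by exact_mod_cast hK4)
  -- logs
  have hnpos : (0:ℝ) < (n:ℝ) := by positivity
  have L1 : Real.logb 2 K ≤ (n:ℝ) * Real.logb 2 (1 + t) := by
    calc Real.logb 2 K ≤ Real.logb 2 ((1 + t) ^ n) :=
          Real.logb_le_logb_of_le (by norm_num) (by positivity) hKc
    _ = (n:ℝ) * Real.logb 2 (1 + t) := Real.logb_pow _ _ _
  have L2 : Real.logb 2 (Real.logb 2 K) ≤ Real.logb 2 ((n:ℝ) * Real.logb 2 (1 + t)) :=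
    Real.logb_le_logb_of_le (by norm_num) (by linarith) L1
  have L3 : Real.logb 2 ((n:ℝ) * Real.logb 2 (1 + t))
      = Real.logb 2 (n:ℝ) + Real.logb 2 (Real.logb 2 (1 + t)) :=
    Real.logb_mul (by positivity) (by linarith)
  have L4 : Real.logb 2 (n:ℝ) = (s:ℝ) + 1 := by
    rw [hn]
    push_cast
    rw [show (2:ℝ) * 2 ^ s = 2 ^ (s + 1) by ring, Real.logb_pow,
      Real.logb_self_eq_one (by norm_num)]
    push_cast; ring
  rw [L3, L4] at L2
  linarith
end

section
/- Let d ≥ 1 and 0 ≤ δ < 1. Any family of unit vectors in C^d that is pairwise δ-almost-orthogonal (|⟨u, v⟩| ≤ δ for all distinct u, v in the family) has cardinality at most (1 + √(2/(1−δ)))^(2d). -/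
open scoped InnerProductSpace ENNReal

open MeasureTheory Module

theorem stmt_5 (d : ℕ) (hd : 1 ≤ d) (δ : ℝ) (hδ0 : 0 ≤ δ) (hδ1 : δ < 1)
    (S : Finset (EuclideanSpace ℂ (Fin d)))
    (hunit : ∀ u ∈ S, ‖u‖ = 1)
    (h : ∀ u ∈ S, ∀ v ∈ S, u ≠ v → ‖⟪u, v⟫_ℂ‖ ≤ δ) :
    (S.card : ℝ) ≤ (1 + Real.sqrt (2 / (1 - δ))) ^ (2 * d) := by
  haveI : Nonempty (Fin d) := ⟨⟨0, hd⟩⟩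
  letI : MeasurableSpace (EuclideanSpace ℂ (Fin d)) := borel _
  letI : BorelSpace (EuclideanSpace ℂ (Fin d)) := ⟨rfl⟩
  have h1δ : (0:ℝ) < 1 - δ := by linarith
  set r : ℝ := Real.sqrt ((1 - δ) / 2) with hr_def
  have hr0 : 0 < r := Real.sqrt_pos.mpr (by linarith)
  have hsep : ∀ u ∈ S, ∀ v ∈ S, u ≠ v → 2 * r ≤ ‖u - v‖ := by
    intro u hu v hv huv
    have hsq : (2*r)^2 ≤ ‖u - v‖^2 := by
      have hns := @norm_sub_sq ℂ _ _ _ _ u v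
      rw [hunit u hu, hunit v hv] at hns
      have hre : Complex.re ⟪u, v⟫_ℂ ≤ δ :=
        le_trans (Complex.re_le_norm _) (h u hu v hv huv)
      have h2r : (2*r)^2 = 2 * (1 - δ) := by
        rw [mul_pow, Real.sq_sqrt (by linarith : (0:ℝ) ≤ (1-δ)/2)]
        ring
      rw [h2r, hns]
      simp only [RCLike.re_to_complex]
      nlinarith
    calc 2*r = Real.sqrt ((2*r)^2) := (Real.sqrt_sq (by positivity)).symm
      _ ≤ Real.sqrt (‖u - v‖^2) := Real.sqrt_le_sqrt hsq
      _ = ‖u - v‖ := Real.sqrt_sq (norm_nonneg _)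
  have hdisj : (S : Set (EuclideanSpace ℂ (Fin d))).PairwiseDisjoint
      (fun u => Metric.ball u r) := by
    intro u hu v hv huv
    apply Metric.ball_disjoint_ball
    rw [dist_eq_norm]
    linarith [hsep u hu v hv huv]
  have hsub : (⋃ u ∈ S, Metric.ball u r) ⊆ Metric.ball (0:EuclideanSpace ℂ (Fin d)) (1 + r) := by
    intro x hx
    simp only [Set.mem_iUnion] at hx
    obtain ⟨u, hu, hxu⟩ := hx
    rw [Metric.mem_ball] at *
    have htri : dist x 0 ≤ dist x u + dist u 0 := dist_triangle _ _ _
    have hu0 : dist u 0 = 1 := by rw [dist_zero_right]; exact hunit u hu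
    linarith
  have hvol : (S.card : ℝ≥0∞) * volume (Metric.ball (0:EuclideanSpace ℂ (Fin d)) r)
      ≤ volume (Metric.ball (0:EuclideanSpace ℂ (Fin d)) (1+r)) := by
    have h1 : ∑ u ∈ S, volume (Metric.ball u r) = volume (⋃ u ∈ S, Metric.ball u r) :=
      (measure_biUnion_finset hdisj (fun u _ => measurableSet_ball)).symm
    have h2 : ∀ u : EuclideanSpace ℂ (Fin d),
        volume (Metric.ball u r) = volume (Metric.ball (0:EuclideanSpace ℂ (Fin d)) r) := by
      intro u
      rw [InnerProductSpace.volume_ball, InnerProductSpace.volume_ball]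
    calc (S.card : ℝ≥0∞) * volume (Metric.ball (0:EuclideanSpace ℂ (Fin d)) r)
        = ∑ u ∈ S, volume (Metric.ball u r) := by
          rw [Finset.sum_congr rfl (fun u _ => h2 u), Finset.sum_const, nsmul_eq_mul]
      _ = volume (⋃ u ∈ S, Metric.ball u r) := h1
      _ ≤ volume (Metric.ball (0:EuclideanSpace ℂ (Fin d)) (1+r)) := measure_mono hsub
  have hn : finrank ℝ (EuclideanSpace ℂ (Fin d)) = 2 * d := by
    rw [finrank_real_of_complex, finrank_euclideanSpace, Fintype.card_fin]
  rw [InnerProductSpace.volume_ball, InnerProductSpace.volume_ball, hn] at hvol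
  set c : ℝ≥0∞ := ENNReal.ofReal
      (Real.sqrt Real.pi ^ (2*d) / Real.Gamma ((2*d : ℕ) / 2 + 1)) with hc
  have hcpos : 0 < c := by
    rw [hc]
    apply ENNReal.ofReal_pos.mpr
    apply div_pos (by positivity)
    apply Real.Gamma_pos_of_pos
    positivity
  have hcfin : c ≠ ⊤ := ENNReal.ofReal_ne_top
  rw [← mul_assoc] at hvol
  have hkey : (S.card : ℝ≥0∞) * ENNReal.ofReal r ^ (2*d) ≤ ENNReal.ofReal (1+r) ^ (2*d) :=
    (ENNReal.mul_le_mul_iff_left hcpos.ne' hcfin).mp hvol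
  -- convert to reals
  have hfinal : (S.card : ℝ≥0∞) ≤ ENNReal.ofReal (((1+r)/r) ^ (2*d)) := by
    have hrne : ENNReal.ofReal r ^ (2*d) ≠ 0 :=
      pow_ne_zero _ (ENNReal.ofReal_pos.mpr hr0).ne'
    have hrfin : ENNReal.ofReal r ^ (2*d) ≠ ⊤ :=
      ENNReal.pow_ne_top ENNReal.ofReal_ne_top
    rw [← ENNReal.le_div_iff_mul_le (Or.inl hrne) (Or.inl hrfin)] at hkey
    refine hkey.trans (le_of_eq ?_)
    rw [div_pow, ENNReal.ofReal_div_of_pos (pow_pos hr0 _),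
      ENNReal.ofReal_pow (by positivity : (0:ℝ) ≤ 1+r), ENNReal.ofReal_pow hr0.le]
  have hcard : (S.card : ℝ) ≤ ((1+r)/r) ^ (2*d) := by
    have := ENNReal.toReal_mono ENNReal.ofReal_ne_top hfinal
    rw [ENNReal.toReal_ofReal (by positivity)] at this
    simpa using this
  refine hcard.trans (le_of_eq ?_)
  congr 1
  rw [add_div, div_self hr0.ne', hr_def, add_comm]
  congr 1
  rw [one_div, ← Real.sqrt_inv, ← one_div, one_div_div]
end

section
/- Let q be a positive integer, B ⊆ Z/qZ nonempty with |∑_{b∈B} e^{2πi·wb/q}| ≤ δ|B| for all nonzero w, and suppose δ < 1. Then the q vectors ψ(w) ∈ C^B, w ∈ Z/qZ, with ψ(w)_b = (1/√|B|)e^{2πi·wb/q}, are pairwise distinct, and hence q ≤ (1 + √(2/(1−δ)))^(2|B|). -/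
open Complex Finset

/-- The standard additive character of `ZMod q`: `x ↦ e^{2πi·x/q}`. -/
noncomputable def ch (q : ℕ) (x : ZMod q) : ℂ :=
  Complex.exp (2 * Real.pi * Complex.I * (x.val : ℂ) / q)

/-- The phase-hash vector `ψ(w) ∈ ℂ^B`, `ψ(w)_b = (1/√|B|)·e^{2πi·wb/q}`. -/
noncomputable def psi (q : ℕ) (B : Finset (ZMod q)) (w : ZMod q) (b : B) : ℂ :=
  (1 / (Real.sqrt B.card : ℂ)) * ch q (w * (b : ZMod q))

/-!
The vectors `ψ(w)` are unit vectors in `ℂ^B` whose inner products `⟪ψ(w), ψ(w')⟫` are the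
normalised character sums `|B|⁻¹ ∑_{b ∈ B} e^{2πi(w' - w)b/q}`, so δ-goodness makes them pairwise
δ-almost-orthogonal, hence pairwise at distance at least `√(2(1 - δ)) > 0`. Balls of half that
radius around the `q` points are disjoint and lie in a slightly enlarged unit ball of
`ℂ^B ≅ ℝ^{2|B|}`; comparing volumes gives `q ≤ (1 + √(2/(1 - δ)))^{2|B|}`.
-/

open Function Metric MeasureTheory Module
open scoped ENNReal InnerProductSpace ComplexConjugate

theorem card_le_one_add_two_div_pow_finrank {E : Type*} [NormedAddCommGroup E]
    [NormedSpace ℝ E] [FiniteDimensional ℝ E] {ι : Type*} [Fintype ι] {p : ι → E}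
    (hp : ∀ i, ‖p i‖ ≤ 1) {ε : ℝ} (hε : 0 < ε)
    (hsep : Pairwise fun i j => ε ≤ dist (p i) (p j)) :
    (Fintype.card ι : ℝ) ≤ (1 + 2 / ε) ^ finrank ℝ E := by
  borelize E
  set μ : Measure E := Measure.addHaar
  set r := ε / 2 with hr_def
  have hr : 0 < r := by positivity
  have hdisj : Pairwise (Disjoint on fun i => ball (p i) r) := fun i j hij =>
    ball_disjoint_ball (by linarith [hsep hij])
  have hsub : (⋃ i, ball (p i) r) ⊆ ball 0 (1 + r) := by
    refine Set.iUnion_subset fun i z hz => ?_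
    rw [mem_ball, dist_eq_norm] at hz
    rw [mem_ball_zero_iff]
    linarith [norm_le_norm_add_norm_sub' z (p i), hp i]
  have hvol : (Fintype.card ι : ℝ≥0∞) * μ (ball 0 r) ≤ μ (ball 0 (1 + r)) := calc
    _ = ∑ i, μ (ball (p i) r) := by simp [Measure.addHaar_ball_center]
    _ = μ (⋃ i, ball (p i) r) := by
      rw [measure_iUnion hdisj fun _ => measurableSet_ball, tsum_fintype]
    _ ≤ μ (ball 0 (1 + r)) := measure_mono hsub
  have hpow : (Fintype.card ι : ℝ) * r ^ finrank ℝ E ≤ (1 + r) ^ finrank ℝ E := by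
    rwa [Measure.addHaar_ball_of_pos μ 0 hr,
      Measure.addHaar_ball_of_pos μ 0 (show 0 < 1 + r by positivity), ← mul_assoc,
      ENNReal.mul_le_mul_iff_left (measure_ball_pos μ 0 one_pos).ne' measure_ball_lt_top.ne,
      ← ENNReal.ofReal_natCast, ← ENNReal.ofReal_mul (by positivity),
      ENNReal.ofReal_le_ofReal_iff (by positivity)] at hvol
  calc (Fintype.card ι : ℝ) ≤ ((1 + r) / r) ^ finrank ℝ E := by
        rwa [div_pow, le_div_iff₀ (by positivity)]
    _ = (1 + 2 / ε) ^ finrank ℝ E := by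
        rw [hr_def]
        field_simp
        ring

theorem sqrt_two_mul_one_sub_le_dist {𝕜 E : Type*} [RCLike 𝕜] [NormedAddCommGroup E]
    [InnerProductSpace 𝕜 E] {u v : E} (hu : ‖u‖ = 1) (hv : ‖v‖ = 1) {δ : ℝ}
    (huv : ‖⟪u, v⟫_𝕜‖ ≤ δ) : √(2 * (1 - δ)) ≤ dist u v := by
  have hre : RCLike.re ⟪u, v⟫_𝕜 ≤ δ := (RCLike.re_le_norm _).trans huv
  have hsq : 2 * (1 - δ) ≤ dist u v ^ 2 := by
    rw [dist_eq_norm, @norm_sub_sq 𝕜, hu, hv]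
    linarith
  exact Real.sqrt_le_iff.2 ⟨dist_nonneg, hsq⟩

theorem two_div_sqrt_two_mul (x : ℝ) : 2 / √(2 * x) = √(2 / x) := by
  rw [Real.sqrt_mul zero_le_two, Real.sqrt_div zero_le_two, div_mul_eq_div_div, Real.div_sqrt]

theorem ch_zero (q : ℕ) : ch q 0 = 1 := by simp [ch]

section PhaseHash

variable {q : ℕ} [NeZero q]

theorem ch_eq_stdAddChar (x : ZMod q) : ch q x = ZMod.stdAddChar x := by
  rw [ZMod.stdAddChar_apply, ZMod.toCircle_apply, ch]

theorem conj_ch_mul_ch (x y : ZMod q) : conj (ch q x) * ch q y = ch q (y - x) := by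
  simp only [ch_eq_stdAddChar, ZMod.stdAddChar_apply]
  rw [← Circle.coe_inv_eq_conj, ← AddChar.map_neg_eq_inv, ← Circle.coe_mul,
    ← AddChar.map_add_eq_mul, sub_eq_add_neg, add_comm]

variable (B : Finset (ZMod q))

noncomputable def psiVec (w : ZMod q) : EuclideanSpace ℂ B := WithLp.toLp 2 (psi q B w)

theorem inner_psiVec (w w' : ZMod q) :
    ⟪psiVec B w, psiVec B w'⟫_ℂ = (B.card : ℂ)⁻¹ * ∑ b ∈ B, ch q ((w' - w) * b) := by
  simp only [psiVec, PiLp.inner_apply, psi, RCLike.inner_apply', map_mul, mul_mul_mul_comm,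
    conj_ch_mul_ch, ← sub_mul, one_div, map_inv₀, Complex.conj_ofReal, ← mul_inv, ← ofReal_mul,
    Real.mul_self_sqrt (Nat.cast_nonneg _), ofReal_natCast, ← Finset.mul_sum]
  rw [Finset.sum_coe_sort B fun b => ch q ((w' - w) * b)]

variable {B}

theorem norm_psiVec (hB : B.Nonempty) (w : ZMod q) : ‖psiVec B w‖ = 1 := by
  have hself : ⟪psiVec B w, psiVec B w⟫_ℂ = 1 := by
    rw [inner_psiVec, sub_self]
    simp only [zero_mul, ch_zero, Finset.sum_const, nsmul_eq_mul, mul_one]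
    exact inv_mul_cancel₀ (Nat.cast_ne_zero.2 hB.card_pos.ne')
  rw [norm_eq_sqrt_re_inner (𝕜 := ℂ), hself, RCLike.one_re, Real.sqrt_one]

theorem norm_inner_psiVec_le (hB : B.Nonempty) {δ : ℝ}
    (hgood : ∀ w : ZMod q, w ≠ 0 → ‖∑ b ∈ B, ch q (w * b)‖ ≤ δ * B.card) {w w' : ZMod q}
    (hne : w ≠ w') : ‖⟪psiVec B w, psiVec B w'⟫_ℂ‖ ≤ δ := by
  rw [inner_psiVec, norm_mul, norm_inv, Complex.norm_natCast,
    inv_mul_le_iff₀ (Nat.cast_pos.2 hB.card_pos), mul_comm]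
  exact hgood _ (sub_ne_zero.2 hne.symm)

end PhaseHash

theorem stmt_12 (q : ℕ) (hq : 0 < q) (B : Finset (ZMod q)) (hB : B.Nonempty)
    (δ : ℝ) (hδ : δ < 1)
    (hgood : ∀ w : ZMod q, w ≠ 0 → ‖∑ b ∈ B, ch q (w * b)‖ ≤ δ * B.card) :
    Function.Injective (psi q B) ∧
    (q : ℝ) ≤ (1 + Real.sqrt (2 / (1 - δ))) ^ (2 * B.card) := by
  have : NeZero q := ⟨hq.ne'⟩
  have hε : 0 < √(2 * (1 - δ)) := Real.sqrt_pos.2 (by linarith)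
  have hsep : Pairwise fun w w' => √(2 * (1 - δ)) ≤ dist (psiVec B w) (psiVec B w') :=
    fun w w' hne => sqrt_two_mul_one_sub_le_dist (norm_psiVec hB w) (norm_psiVec hB w')
      (norm_inner_psiVec_le hB hgood hne)
  refine ⟨fun w w' h => by_contra fun hne => (hsep hne).not_gt ?_, ?_⟩
  · rwa [show psiVec B w = psiVec B w' from congrArg (WithLp.toLp 2) h, dist_self]
  · have hcard := card_le_one_add_two_div_pow_finrank (fun w => (norm_psiVec hB w).le) hε hsep
    rwa [ZMod.card, finrank_real_of_complex, finrank_euclideanSpace, Fintype.card_coe,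
      two_div_sqrt_two_mul] at hcard
end
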